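/- arXiv:0902.1155 — 2 statements merged into one kernel-verified Lean document; each statement's English description precedes it below -/
import Mathlib

section
/- Let K be any finite field and x, y ∈ K with 1 + x² + y² = 0. Then the 3×3 matrices H₁₁ = [[1,x,y],[x,x²,xy],[y,xy,y²]], H₁₂ = [[1,0,0],[x,0,0],[y,0,0]], H₂₁ = [[1,x,y],[0,0,0],[0,0,0]], H₂₂ = [[1,0,0],[0,0,0],[0,0,0]], together with the identity and zero matrices, form a set closed under multiplication and transpose satisfying Hᵢⱼ·Hₖₗ = Hᵢₗ if (j,k) ≠ (1,1), Hᵢ₁·H₁ₗ = 0, and Hᵢⱼᵀ = Hⱼᵢ. -/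
open Matrix

/-- The four `3 × 3` matrices `Hᵢⱼ` built from elements `x, y` with
`1 + x² + y² = 0`. -/
def Hmat3 {K : Type*} [Field K] (x y : K) :
    Fin 2 → Fin 2 → Matrix (Fin 3) (Fin 3) K :=
  fun i j =>
    if i = 0 then
      (if j = 0 then !![1, x, y; x, x ^ 2, x * y; y, x * y, y ^ 2]
       else !![1, 0, 0; x, 0, 0; y, 0, 0])
    else
      (if j = 0 then !![1, x, y; 0, 0, 0; 0, 0, 0]
       else !![1, 0, 0; 0, 0, 0; 0, 0, 0])

/-! `Hᵢⱼ = uᵢ uⱼᵀ` for `u₀ = (1, x, y)` and `u₁ = (1, 0, 0)`, so `Hᵢⱼ Hₖₗ = (uⱼ ⬝ uₖ) Hᵢₗ`.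
Every dot product `uⱼ ⬝ uₖ` equals `1` except `u₀ ⬝ u₀ = 1 + x² + y² = 0`. -/

section

variable {K : Type*} [Field K] (x y : K)

def Hvec3 : Fin 2 → Fin 3 → K := ![![1, x, y], ![1, 0, 0]]

theorem Hmat3_eq_vecMulVec (i j : Fin 2) :
    Hmat3 x y i j = vecMulVec (Hvec3 x y i) (Hvec3 x y j) := by
  ext a b
  fin_cases i <;> fin_cases j <;> fin_cases a <;> fin_cases b <;>
    simp [Hmat3, Hvec3, vecMulVec_apply, sq, mul_comm]

theorem Hvec3_dotProduct_of_ne {j k : Fin 2} (h : (j, k) ≠ (0, 0)) :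
    Hvec3 x y j ⬝ᵥ Hvec3 x y k = 1 := by
  fin_cases j <;> fin_cases k <;> simp_all [Hvec3, dotProduct, Fin.sum_univ_three]

theorem Hvec3_zero_dotProduct_self : Hvec3 x y 0 ⬝ᵥ Hvec3 x y 0 = 1 + x ^ 2 + y ^ 2 := by
  simp [Hvec3, dotProduct, Fin.sum_univ_three, sq]

theorem Hmat3_mul_Hmat3 (i j k l : Fin 2) :
    Hmat3 x y i j * Hmat3 x y k l = (Hvec3 x y j ⬝ᵥ Hvec3 x y k) • Hmat3 x y i l := by
  simp only [Hmat3_eq_vecMulVec, vecMulVec_mul_vecMulVec, vecMulVec_smul]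

theorem Hmat3_mul_Hmat3_of_ne {i j k l : Fin 2} (h : (j, k) ≠ (0, 0)) :
    Hmat3 x y i j * Hmat3 x y k l = Hmat3 x y i l := by
  rw [Hmat3_mul_Hmat3, Hvec3_dotProduct_of_ne x y h, one_smul]

theorem Hmat3_mul_Hmat3_zero (hxy : 1 + x ^ 2 + y ^ 2 = 0) (i l : Fin 2) :
    Hmat3 x y i 0 * Hmat3 x y 0 l = 0 := by
  rw [Hmat3_mul_Hmat3, Hvec3_zero_dotProduct_self, hxy, zero_smul]

theorem Hmat3_transpose (i j : Fin 2) : (Hmat3 x y i j)ᵀ = Hmat3 x y j i := by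
  rw [Hmat3_eq_vecMulVec, Hmat3_eq_vecMulVec, transpose_vecMulVec]

end

theorem twisted_A_in_M3_general {K : Type*} [Field K]
    (x y : K) (hxy : 1 + x ^ 2 + y ^ 2 = 0) :
    (∀ X Y : Matrix (Fin 3) (Fin 3) K,
        ((∃ i j, X = Hmat3 x y i j) ∨ X = 1 ∨ X = 0) →
        ((∃ i j, Y = Hmat3 x y i j) ∨ Y = 1 ∨ Y = 0) →
        (((∃ i j, X * Y = Hmat3 x y i j) ∨ X * Y = 1 ∨ X * Y = 0) ∧
          ((∃ i j, Xᵀ = Hmat3 x y i j) ∨ Xᵀ = 1 ∨ Xᵀ = 0))) ∧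
    (∀ i j k l : Fin 2, (j, k) ≠ (0, 0) →
        Hmat3 x y i j * Hmat3 x y k l = Hmat3 x y i l) ∧
    (∀ i l : Fin 2, Hmat3 x y i 0 * Hmat3 x y 0 l = 0) ∧
    (∀ i j : Fin 2, (Hmat3 x y i j)ᵀ = Hmat3 x y j i) := by
  refine ⟨?_, fun _ _ _ _ => Hmat3_mul_Hmat3_of_ne x y, Hmat3_mul_Hmat3_zero x y hxy,
    Hmat3_transpose x y⟩
  rintro X Y hX hY
  refine ⟨?_, ?_⟩
  · rcases hX with ⟨i, j, rfl⟩ | rfl | rfl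
    · rcases hY with ⟨k, l, rfl⟩ | rfl | rfl
      · by_cases h : (j, k) = (0, 0)
        · obtain ⟨rfl, rfl⟩ := Prod.mk.inj h
          exact .inr (.inr (Hmat3_mul_Hmat3_zero x y hxy i l))
        · exact .inl ⟨i, l, Hmat3_mul_Hmat3_of_ne x y h⟩
      · exact .inl ⟨i, j, mul_one _⟩
      · exact .inr (.inr (mul_zero _))
    · rwa [one_mul]
    · exact .inr (.inr (zero_mul _))
  · rcases hX with ⟨i, j, rfl⟩ | rfl | rfl
    · exact .inl ⟨j, i, Hmat3_transpose x y i j⟩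
    · exact .inr (.inl transpose_one)
    · exact .inr (.inr transpose_zero)

/-- For a finite field `K` and `x, y ∈ K` with `1 + x² + y² = 0`, the matrices
`Hᵢⱼ` together with the identity and zero matrices form a set closed under
multiplication and transpose, with the stated multiplication and transposition
rules. -/
theorem twisted_A_in_M3 {K : Type*} [Field K] [Fintype K]
    (x y : K) (hxy : 1 + x ^ 2 + y ^ 2 = 0) :
    (∀ X Y : Matrix (Fin 3) (Fin 3) K,
        ((∃ i j, X = Hmat3 x y i j) ∨ X = 1 ∨ X = 0) →
        ((∃ i j, Y = Hmat3 x y i j) ∨ Y = 1 ∨ Y = 0) →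
        (((∃ i j, X * Y = Hmat3 x y i j) ∨ X * Y = 1 ∨ X * Y = 0) ∧
          ((∃ i j, Xᵀ = Hmat3 x y i j) ∨ Xᵀ = 1 ∨ Xᵀ = 0))) ∧
    (∀ i j k l : Fin 2, (j, k) ≠ (0, 0) →
        Hmat3 x y i j * Hmat3 x y k l = Hmat3 x y i l) ∧
    (∀ i l : Fin 2, Hmat3 x y i 0 * Hmat3 x y 0 l = 0) ∧
    (∀ i j : Fin 2, (Hmat3 x y i j)ᵀ = Hmat3 x y j i) :=
  twisted_A_in_M3_general x y hxy
end

section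
/- Let K be a finite field with |K| ≡ 3 (mod 4) and let d be the exponent of GL₂(K). Then every 2×2 matrix A over K satisfies A·(AᵀA)^d = A. -/
/-!
If `A` is invertible, so is `B = Aᵀ A`, and `B ^ d = 1`. Otherwise the `2 × 2` identity
`A B = tr B • A - det A • (adj A)ᵀ` reduces to `A B = t • A` with `t = tr B`, so
`A B ^ d = t ^ d • A`. A nonzero `t` embeds in `GL₂(K)` as a scalar matrix, hence `t ^ d = 1`.
If `t = 0` then `Bᵀ B = Aᵀ (A B) = 0`; since `-1` is not a square, `x² + y² = 0` forces
`x = y = 0`, so a `2 × 2` matrix `M` with `Mᵀ M = 0` vanishes, giving `B = 0` and then `A = 0`.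
-/

open Matrix

theorem IsUnit.pow_exponent_units_eq_one {M : Type*} [Monoid M] {a : M} (ha : IsUnit a) :
    a ^ Monoid.exponent Mˣ = 1 := by
  obtain ⟨u, rfl⟩ := ha
  rw [← Units.val_pow_eq_pow_val, Monoid.pow_exponent_eq_one, Units.val_one]

theorem pow_exponent_generalLinearGroup_eq_one {n R : Type*} [Fintype n] [DecidableEq n]
    [Nonempty n] [CommRing R] {t : R} (ht : IsUnit t) :
    t ^ Monoid.exponent (GeneralLinearGroup n R) = 1 := by
  have := (ht.map (scalar n)).pow_exponent_units_eq_one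
  rwa [← map_pow, ← map_one (scalar n), scalar_inj] at this

theorem mul_pow_eq_pow_smul_of_mul_eq_smul {S M : Type*} [Monoid S] [Monoid M] [MulAction S M]
    [IsScalarTower S M M] {a b : M} {t : S} (h : a * b = t • a) (n : ℕ) :
    a * b ^ n = t ^ n • a := by
  induction n with
  | zero => simp
  | succ n ih => rw [pow_succ, ← mul_assoc, ih, smul_mul_assoc, h, smul_smul, pow_succ]

theorem eq_zero_and_eq_zero_of_sq_add_sq_eq_zero {K : Type*} [Field K] (hK : ¬IsSquare (-1 : K))
    {x y : K} (h : x ^ 2 + y ^ 2 = 0) : x = 0 ∧ y = 0 := by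
  have hy : y = 0 := by
    by_contra hy
    exact hK ⟨x / y, by field_simp; linear_combination -h⟩
  subst hy
  exact ⟨pow_eq_zero_iff two_ne_zero |>.mp (by simpa using h), rfl⟩

namespace Matrix

theorem mul_transpose_mul_self_fin_two {R : Type*} [CommRing R] (A : Matrix (Fin 2) (Fin 2) R) :
    A * (Aᵀ * A) = (Aᵀ * A).trace • A - A.det • (adjugate A)ᵀ := by
  ext i j
  fin_cases i <;> fin_cases j <;>
    simp [mul_apply, Fin.sum_univ_two, trace_fin_two, det_fin_two, adjugate_fin_two] <;> ring

variable {K : Type*} [Field K]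

theorem eq_zero_of_transpose_mul_self_eq_zero (hK : ¬IsSquare (-1 : K))
    {A : Matrix (Fin 2) (Fin 2) K} (hA : Aᵀ * A = 0) : A = 0 := by
  ext i j
  have hj : A 0 j ^ 2 + A 1 j ^ 2 = 0 := by
    simpa [mul_apply, Fin.sum_univ_two, sq] using congr_fun (congr_fun hA j) j
  fin_cases i
  exacts [(eq_zero_and_eq_zero_of_sq_add_sq_eq_zero hK hj).1,
    (eq_zero_and_eq_zero_of_sq_add_sq_eq_zero hK hj).2]

theorem eq_zero_of_mul_transpose_mul_self_eq_zero (hK : ¬IsSquare (-1 : K))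
    {A : Matrix (Fin 2) (Fin 2) K} (hA : A * (Aᵀ * A) = 0) : A = 0 := by
  refine eq_zero_of_transpose_mul_self_eq_zero hK (eq_zero_of_transpose_mul_self_eq_zero hK ?_)
  rw [transpose_mul, transpose_transpose, mul_assoc, hA, mul_zero]

end Matrix

/-- Let `K` be a finite field with `|K| ≡ 3 (mod 4)` and let `d` be the exponent
of `GL₂(K)`. Then every `2 × 2` matrix `A` over `K` satisfies `A (Aᵀ A)^d = A`. -/
theorem matrix_transpose_power_identity {K : Type*} [Field K] [Fintype K]
    (hcard : Fintype.card K % 4 = 3)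
    (A : Matrix (Fin 2) (Fin 2) K) :
    A * (Aᵀ * A) ^ Monoid.exponent (Matrix.GeneralLinearGroup (Fin 2) K) = A := by
  have hK : ¬IsSquare (-1 : K) := by
    rw [FiniteField.isSquare_neg_one_iff, not_not]
    exact hcard
  by_cases hA : IsUnit A.det
  · have hB : IsUnit (Aᵀ * A) := by
      rw [isUnit_iff_isUnit_det, det_mul, det_transpose]
      exact hA.mul hA
    rw [hB.pow_exponent_units_eq_one, mul_one]
  have hdet : A.det = 0 := by simpa using hA
  have hAB : A * (Aᵀ * A) = (Aᵀ * A).trace • A := by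
    rw [mul_transpose_mul_self_fin_two, hdet, zero_smul, sub_zero]
  rw [mul_pow_eq_pow_smul_of_mul_eq_smul hAB]
  obtain ht | ht := eq_or_ne (Aᵀ * A).trace 0
  · rw [ht, zero_smul] at hAB
    rw [eq_zero_of_mul_transpose_mul_self_eq_zero hK hAB, smul_zero]
  · rw [pow_exponent_generalLinearGroup_eq_one ht.isUnit, one_smul]
end
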